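/- arXiv:2006.01773 — 4 statements merged into one kernel-verified Lean document; each statement's English description precedes it below -/
import Mathlib

section
/- Let M be an n×n symmetric negative definite matrix with integer entries such that all off-diagonal entries are nonnegative. If x ∈ ℤ^n satisfies M·x ≤ 0 componentwise, then x ≥ 0 componentwise. -/
/-!
Write `x = x⁺ - x⁻`. Since `x⁻` and `x⁺` have disjoint supports and `M` is nonnegative off the
diagonal, `x⁻ ⬝ M x⁺ ≥ 0`; since `M x ≤ 0`, also `x⁻ ⬝ M x ≤ 0`. Hence
`x⁻ ⬝ M x⁻ = x⁻ ⬝ M x⁺ - x⁻ ⬝ M x ≥ 0`, and negative definiteness forces `x⁻ = 0`.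
-/

open Matrix

namespace Matrix

variable {ι : Type*} [Fintype ι]

theorem dotProduct_mulVec_nonneg_of_disjoint {R : Type*} [Ring R] [PartialOrder R]
    [IsOrderedRing R] {A : Matrix ι ι R} (hoff : ∀ i j, i ≠ j → 0 ≤ A i j) {u p : ι → R}
    (hu : 0 ≤ u) (hp : 0 ≤ p) (hup : ∀ i, u i = 0 ∨ p i = 0) : 0 ≤ u ⬝ᵥ A *ᵥ p := by
  refine Finset.sum_nonneg fun i _ => ?_
  rcases hup i with hui | hpi
  · simp [hui]
  refine mul_nonneg (hu i) (Finset.sum_nonneg fun j _ => ?_)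
  rcases eq_or_ne i j with rfl | hij
  · simp [hpi]
  · exact mul_nonneg (hoff i j hij) (hp j)

theorem nonneg_of_mulVec_nonpos {R : Type*} [Ring R] [LinearOrder R] [IsOrderedRing R]
    {A : Matrix ι ι R} (hoff : ∀ i j, i ≠ j → 0 ≤ A i j)
    (hdef : ∀ v, 0 ≤ v → v ≠ 0 → v ⬝ᵥ A *ᵥ v < 0) {x : ι → R} (hx : A *ᵥ x ≤ 0) : 0 ≤ x := by
  have hdisj (i : ι) : x⁻ i = 0 ∨ x⁺ i = 0 :=
    (le_total 0 (x i)).imp negPart_eq_zero.2 posPart_eq_zero.2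
  have hcross : 0 ≤ x⁻ ⬝ᵥ A *ᵥ x⁺ :=
    dotProduct_mulVec_nonneg_of_disjoint hoff (negPart_nonneg x) (posPart_nonneg x) hdisj
  have hx' : 0 ≤ x⁻ ⬝ᵥ -(A *ᵥ x) :=
    dotProduct_nonneg_of_nonneg (negPart_nonneg x) (neg_nonneg.2 hx)
  have hquad : 0 ≤ x⁻ ⬝ᵥ A *ᵥ x⁻ :=
    calc 0 ≤ x⁻ ⬝ᵥ A *ᵥ x⁺ + x⁻ ⬝ᵥ -(A *ᵥ x) := add_nonneg hcross hx'
      _ = x⁻ ⬝ᵥ A *ᵥ x⁻ := by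
        rw [← dotProduct_add, ← mulVec_neg, ← mulVec_add, ← sub_eq_add_neg,
          sub_eq_iff_eq_add'.2 (sub_eq_iff_eq_add.1 (posPart_sub_negPart x))]
  by_contra hneg
  exact (hdef _ (negPart_nonneg x) (by simpa using hneg)).not_ge hquad

theorem dotProduct_mulVec_neg_of_posDef_neg_map_intCast {M : Matrix ι ι ℤ}
    (hM : (-(M.map (Int.cast : ℤ → ℝ))).PosDef) {v : ι → ℤ} (hv : v ≠ 0) :
    v ⬝ᵥ M *ᵥ v < 0 := by
  have hv' : (Int.cast ∘ v : ι → ℝ) ≠ 0 :=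
    fun h => hv (funext fun i => Int.cast_eq_zero.1 (congrFun h i))
  have hcast : ((v ⬝ᵥ M *ᵥ v : ℤ) : ℝ) =
      (Int.cast ∘ v) ⬝ᵥ M.map Int.cast *ᵥ (Int.cast ∘ v) := by
    rw [← eq_intCast (Int.castRingHom ℝ), RingHom.map_dotProduct]
    congr 1
    funext i
    exact RingHom.map_mulVec _ M v i
  have hpos := hM.dotProduct_mulVec_pos hv'
  simp only [neg_mulVec, dotProduct_neg, star_trivial, ← hcast] at hpos
  exact_mod_cast neg_pos.1 hpos

end Matrix

theorem lipman_cone_nonneg_general {n : ℕ} (M : Matrix (Fin n) (Fin n) ℤ)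
    (hnegdef : (-(M.map (Int.cast : ℤ → ℝ))).PosDef)
    (hoff : ∀ i j, i ≠ j → 0 ≤ M i j)
    (x : Fin n → ℤ) (hx : ∀ i, M.mulVec x i ≤ 0) :
    ∀ i, 0 ≤ x i :=
  nonneg_of_mulVec_nonpos hoff
    (fun _ _ hv => dotProduct_mulVec_neg_of_posDef_neg_map_intCast hnegdef hv) hx

theorem lipman_cone_nonneg {n : ℕ} (M : Matrix (Fin n) (Fin n) ℤ)
    (hsymm : M.IsSymm)
    (hnegdef : (-(M.map (Int.cast : ℤ → ℝ))).PosDef)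
    (hoff : ∀ i j, i ≠ j → 0 ≤ M i j)
    (x : Fin n → ℤ) (hx : ∀ i, M.mulVec x i ≤ 0) :
    ∀ i, 0 ≤ x i :=
  lipman_cone_nonneg_general M hnegdef hoff x hx
end

section
/- Let M be an n×n symmetric matrix with nonnegative off-diagonal entries, and let x, y ∈ ℤ^n satisfy M·x ≤ 0 and M·y ≤ 0 componentwise. Then the componentwise minimum z, defined by z_i = min(x_i, y_i), also satisfies M·z ≤ 0 componentwise. -/
private lemma lipman_aux {n : ℕ} (M : Matrix (Fin n) (Fin n) ℤ)
    (hoff : ∀ i j, i ≠ j → 0 ≤ M i j)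
    (z w : Fin n → ℤ) (i : Fin n) (hzw : ∀ j, z j ≤ w j) (hi : z i = w i)
    (hw : M.mulVec w i ≤ 0) : M.mulVec z i ≤ 0 := by
  have : M.mulVec z i ≤ M.mulVec w i := by
    simp only [Matrix.mulVec, dotProduct]
    apply Finset.sum_le_sum
    intro j _
    by_cases h : j = i
    · subst h; rw [hi]
    · exact mul_le_mul_of_nonneg_left (hzw j) (hoff i j (Ne.symm h))
  exact this.trans hw

theorem lipman_cone_min_closed {n : ℕ} (M : Matrix (Fin n) (Fin n) ℤ)
    (hsymm : M.IsSymm)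
    (hoff : ∀ i j, i ≠ j → 0 ≤ M i j)
    (x y : Fin n → ℤ)
    (hx : ∀ i, M.mulVec x i ≤ 0) (hy : ∀ i, M.mulVec y i ≤ 0) :
    ∀ i, M.mulVec (fun j => min (x j) (y j)) i ≤ 0 := by
  intro i
  rcases le_total (x i) (y i) with h | h
  · exact lipman_aux M hoff _ x i (fun j => min_le_left _ _) (min_eq_left h) (hx i)
  · exact lipman_aux M hoff _ y i (fun j => min_le_right _ _) (min_eq_right h) (hy i)
end

section
/- Let M be an n×n symmetric negative definite matrix with nonnegative off-diagonal entries. Let Z, Z' ∈ ℤ^n satisfy: M·Z ≤ 0 and M·Z' ≤ 0 componentwise; 1 ≤ Z'_i ≤ Z_i for every i; and for every index v with (M·Z)_v < 0 one has Z_v = 1. Then Z = Z'. -/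
/-! With `D = Z - Z' ≥ 0`, every term of `D ⬝ᵥ M Z` vanishes: where `(M Z)_v < 0` we have
`Z_v = 1 ≤ Z'_v ≤ Z_v`, so `D_v = 0`. Hence `D ⬝ᵥ M D = D ⬝ᵥ M Z - D ⬝ᵥ M Z' ≥ 0`, which by
negative definiteness of `M` forces `D = 0`. -/

open Matrix

variable {ι : Type*} [Fintype ι]

theorem Matrix.eq_zero_of_nonneg_dotProduct_mulVec_self (M : Matrix ι ι ℤ)
    (hM : (-(M.map (Int.cast : ℤ → ℝ))).PosDef) {D : ι → ℤ} (hD : 0 ≤ D ⬝ᵥ M *ᵥ D) :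
    D = 0 := by
  by_contra hne
  have hcast : ((Int.cast : ℤ → ℝ) ∘ D) ≠ 0 := fun h =>
    hne (funext fun i => by simpa using congrFun h i)
  have hcast_eq : ((Int.cast : ℤ → ℝ) ∘ D) ⬝ᵥ M.map Int.cast *ᵥ ((Int.cast : ℤ → ℝ) ∘ D)
      = ((D ⬝ᵥ M *ᵥ D : ℤ) : ℝ) := by
    simp only [dotProduct, mulVec, map_apply, Function.comp_apply]
    push_cast
    rfl
  have hpos := hM.dotProduct_mulVec_pos hcast
  rw [neg_mulVec, dotProduct_neg, star_trivial, hcast_eq] at hpos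
  have hD_real : (0 : ℝ) ≤ (D ⬝ᵥ M *ᵥ D : ℤ) := by exact_mod_cast hD
  linarith

theorem sub_dotProduct_mulVec_eq_zero_of_eq_one (M : Matrix ι ι ℤ) {Z Z' : ι → ℤ}
    (hZ : ∀ i, (M *ᵥ Z) i ≤ 0) (hbound : ∀ i, 1 ≤ Z' i ∧ Z' i ≤ Z i)
    (hLnode : ∀ v, (M *ᵥ Z) v < 0 → Z v = 1) :
    (Z - Z') ⬝ᵥ M *ᵥ Z = 0 := by
  refine Finset.sum_eq_zero fun v _ => ?_
  rcases (hZ v).lt_or_eq with hneg | hzero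
  · have hZv : Z v = 1 := hLnode v hneg
    have hZ'v := hbound v
    rw [Pi.sub_apply, show Z v - Z' v = 0 by omega, zero_mul]
  · simp [hzero]

theorem zmax_eq_zmin_general {n : ℕ} (M : Matrix (Fin n) (Fin n) ℤ)
    (hnegdef : (-(M.map (Int.cast : ℤ → ℝ))).PosDef)
    (Z Z' : Fin n → ℤ)
    (hZ : ∀ i, M.mulVec Z i ≤ 0) (hZ' : ∀ i, M.mulVec Z' i ≤ 0)
    (hbound : ∀ i, 1 ≤ Z' i ∧ Z' i ≤ Z i)
    (hLnode : ∀ v, M.mulVec Z v < 0 → Z v = 1) :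
    Z = Z' := by
  have hD : 0 ≤ Z - Z' := fun i => sub_nonneg.mpr (hbound i).2
  have hDZ' : (Z - Z') ⬝ᵥ M *ᵥ Z' ≤ 0 :=
    Finset.sum_nonpos fun v _ => mul_nonpos_of_nonneg_of_nonpos (hD v) (hZ' v)
  have hDZ := sub_dotProduct_mulVec_eq_zero_of_eq_one M hZ hbound hLnode
  have hDD : 0 ≤ (Z - Z') ⬝ᵥ M *ᵥ (Z - Z') := by
    rw [mulVec_sub, dotProduct_sub, hDZ]
    linarith
  exact sub_eq_zero.mp (M.eq_zero_of_nonneg_dotProduct_mulVec_self hnegdef hDD)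

theorem zmax_eq_zmin {n : ℕ} (M : Matrix (Fin n) (Fin n) ℤ)
    (hsymm : M.IsSymm)
    (hnegdef : (-(M.map (Int.cast : ℤ → ℝ))).PosDef)
    (hoff : ∀ i j, i ≠ j → 0 ≤ M i j)
    (Z Z' : Fin n → ℤ)
    (hZ : ∀ i, M.mulVec Z i ≤ 0) (hZ' : ∀ i, M.mulVec Z' i ≤ 0)
    (hbound : ∀ i, 1 ≤ Z' i ∧ Z' i ≤ Z i)
    (hLnode : ∀ v, M.mulVec Z v < 0 → Z v = 1) :
    Z = Z' :=
  zmax_eq_zmin_general M hnegdef Z Z' hZ hZ' hbound hLnode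
end

section
/- Let M be an n×n symmetric negative definite real matrix with nonnegative off-diagonal entries. Then M is invertible and every entry of −M⁻¹ is nonnegative. -/
/-!
Write `A = -M`, a positive definite matrix with nonpositive off-diagonal entries. If `A y ≥ 0`
and `q = y⁻` is the negative part of `y`, then `qᵀ A q = qᵀ A y⁺ - qᵀ A y ≤ 0`: the second term
is nonnegative, and the first is nonpositive because `q` and `y⁺` have disjoint supports, so only
off-diagonal entries of `A` contribute to it. Positive definiteness forces `q = 0`, i.e. `y ≥ 0`.
Applied to the columns of `A⁻¹ = -M⁻¹`, for which `A y` is a standard basis vector, this gives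
`-M⁻¹ ≥ 0`.
-/

open Matrix

lemma negPart_mul_posPart {α : Type*} [Ring α] [LinearOrder α] [IsOrderedRing α] (a : α) :
    a⁻ * a⁺ = 0 := by
  rcases le_total a 0 with ha | ha <;> simp [ha]

namespace Matrix

variable {ι : Type*} [Fintype ι] {A : Matrix ι ι ℝ}

lemma negPart_dotProduct_mulVec_posPart_nonpos (hoff : ∀ i j, i ≠ j → A i j ≤ 0) (y : ι → ℝ) :
    y⁻ ⬝ᵥ (A *ᵥ y⁺) ≤ 0 := by
  simp only [dotProduct, mulVec, Finset.mul_sum]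
  refine Finset.sum_nonpos fun i _ => Finset.sum_nonpos fun j _ => ?_
  rcases eq_or_ne i j with rfl | hij
  · rw [mul_left_comm, Pi.negPart_apply, Pi.posPart_apply, negPart_mul_posPart, mul_zero]
  · exact mul_nonpos_of_nonneg_of_nonpos (negPart_nonneg _)
      (mul_nonpos_of_nonpos_of_nonneg (hoff i j hij) (posPart_nonneg _))

lemma PosDef.nonneg_of_mulVec_nonneg (hA : A.PosDef) (hoff : ∀ i j, i ≠ j → A i j ≤ 0)
    {y : ι → ℝ} (hy : 0 ≤ A *ᵥ y) : 0 ≤ y := by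
  rw [← negPart_eq_zero]
  by_contra hne
  have hpos : 0 < y⁻ ⬝ᵥ (A *ᵥ y⁻) := by simpa using hA.dotProduct_mulVec_pos hne
  have hsplit : y⁻ ⬝ᵥ (A *ᵥ y⁻) = y⁻ ⬝ᵥ (A *ᵥ y⁺) - y⁻ ⬝ᵥ (A *ᵥ y) := by
    conv_rhs => enter [2, 2]; rw [← posPart_sub_negPart y, mulVec_sub]
    rw [dotProduct_sub]
    ring
  have hcross := negPart_dotProduct_mulVec_posPart_nonpos hoff y
  have hy' : 0 ≤ y⁻ ⬝ᵥ (A *ᵥ y) := dotProduct_nonneg_of_nonneg (negPart_nonneg y) hy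
  linarith

lemma PosDef.rightInverse_nonneg [DecidableEq ι] (hA : A.PosDef)
    (hoff : ∀ i j, i ≠ j → A i j ≤ 0) {B : Matrix ι ι ℝ} (hAB : A * B = 1) (i j : ι) :
    0 ≤ B i j := by
  have hcol : 0 ≤ A *ᵥ (B *ᵥ Pi.single j 1) := by
    rw [mulVec_mulVec, hAB, one_mulVec]
    exact Pi.single_nonneg.mpr zero_le_one
  simpa [mulVec_single_one] using hA.nonneg_of_mulVec_nonneg hoff hcol i

end Matrix

theorem inverse_nonpos_general {n : ℕ} (M : Matrix (Fin n) (Fin n) ℝ)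
    (hnegdef : (-M).PosDef)
    (hoff : ∀ i j, i ≠ j → 0 ≤ M i j) :
    IsUnit M.det ∧ ∀ i j, 0 ≤ -(M⁻¹ i j) := by
  have hunit : IsUnit M.det := (isUnit_iff_isUnit_det M).mp (by simpa using hnegdef.isUnit.neg)
  refine ⟨hunit, fun i j => ?_⟩
  have hinv : -M * -M⁻¹ = 1 := by rw [neg_mul_neg, mul_nonsing_inv _ hunit]
  exact hnegdef.rightInverse_nonneg
    (fun a b hab => neg_nonpos.mpr (hoff a b hab)) hinv i j

theorem inverse_nonpos {n : ℕ} (M : Matrix (Fin n) (Fin n) ℝ)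
    (hsymm : M.IsSymm)
    (hnegdef : (-M).PosDef)
    (hoff : ∀ i j, i ≠ j → 0 ≤ M i j) :
    IsUnit M.det ∧ ∀ i j, 0 ≤ -(M⁻¹ i j) :=
  inverse_nonpos_general M hnegdef hoff
end
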